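/- Let ψ = v v† be a pure state on n qubits. Then for every P ∈ P_n: Σ_{Q ∈ P_n} q̃_ψ(Q) · q̃_ψ(QP) = Σ_{Q ∈ P_n} p̃_ψ(Q) · p̃_ψ(QP); that is, the Bell difference distribution of ψ equals the self-convolution of the Pauli distribution of ψ. -/

import Mathlib

open Matrix

noncomputable section

/-- The four 2×2 Pauli matrices: `0 ↦ I`, `1 ↦ X`, `2 ↦ Y`, `3 ↦ Z`. -/
def pauli1 : Fin 4 → Matrix (Fin 2) (Fin 2) ℂ
  | 0 => !![1, 0; 0, 1]
  | 1 => !![0, 1; 1, 0]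
  | 2 => !![0, -Complex.I; Complex.I, 0]
  | 3 => !![1, 0; 0, -1]

/-- The `n`-qubit Pauli operator associated to the string `s : Fin n → Fin 4`. -/
def PauliOp (n : ℕ) (s : Fin n → Fin 4) :
    Matrix (Fin n → Fin 2) (Fin n → Fin 2) ℂ :=
  Matrix.of fun i j => ∏ a, pauli1 (s a) (i a) (j a)

/-- `p̃_ψ(A) := |tr(Aψ)|²/d = tr(Aψ) · conj(tr(Aψ)) / 2^n`. -/
def pTil (n : ℕ) (ψ A : Matrix (Fin n → Fin 2) (Fin n → Fin 2) ℂ) : ℂ :=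
  Matrix.trace (A * ψ) * star (Matrix.trace (A * ψ)) / (2 ^ n : ℂ)

/-- `q̃_ψ(A) := tr(A ψ A† ψᵀ)/2^n`, the Bell overlap distribution. -/
def qTil (n : ℕ) (ψ A : Matrix (Fin n → Fin 2) (Fin n → Fin 2) ℂ) : ℂ :=
  Matrix.trace (A * ψ * Aᴴ * ψᵀ) / (2 ^ n : ℂ)

/-!
Label the Pauli operators by strings over `{0, 1, 2, 3} = {I, X, Y, Z}`; then `P_s P_t` is
`P_{s ⊕ t}` up to a phase, where `⊕` is labelwise xor. With `χ(t, u) = ±1` the commutation sign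
of `P_t` and `P_u`, the transform `f ↦ (t ↦ ∑_u χ(t, u) f(u))` is injective and turns the
convolution `u ↦ ∑_s f(s) g(s ⊕ u)` into the pointwise product, so it suffices to compare the
transforms of `p̃_ψ` and `q̃_ψ`. Writing `χ(t, u) P_u = P_t P_u P_t` and summing over `u` with the
completeness relation `∑_s (P_s)ᵢⱼ (P_s)ₖₗ = d δᵢₗ δⱼₖ`, the transform of `p̃_ψ` at `t` is
`tr(P_t ψ P_t ψ) = tr(P_t ψ)²` (as `ψ` has rank one) and that of `q̃_ψ` is `± tr(P_t ψ)²`, the sign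
being that of `P_tᵀ = ± P_t`. So the squares of the two transforms agree.
-/

open Finset

section KronPi

variable {ι κ R : Type*} [Fintype ι] [CommSemiring R]

def kronPi (M : ι → Matrix κ κ R) : Matrix (ι → κ) (ι → κ) R :=
  of fun i j => ∏ a, M a (i a) (j a)

lemma kronPi_mul [DecidableEq ι] [Fintype κ] (M N : ι → Matrix κ κ R) :
    kronPi M * kronPi N = kronPi fun a => M a * N a := by
  ext i j
  simp only [kronPi, mul_apply, of_apply, ← prod_mul_distrib]
  exact (Fintype.prod_sum fun a x => M a (i a) x * N a x (j a)).symm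

lemma kronPi_smul (c : ι → R) (M : ι → Matrix κ κ R) :
    kronPi (fun a => c a • M a) = (∏ a, c a) • kronPi M := by
  ext i j
  simp [kronPi, prod_mul_distrib]

lemma kronPi_transpose (M : ι → Matrix κ κ R) : (kronPi M)ᵀ = kronPi fun a => (M a)ᵀ := rfl

lemma kronPi_conjTranspose [StarRing R] (M : ι → Matrix κ κ R) :
    (kronPi M)ᴴ = kronPi fun a => (M a)ᴴ := by
  ext i j
  simp [kronPi, star_prod]

end KronPi

lemma star_trace_mul_of_isHermitian {m R : Type*} [Fintype m] [CommSemiring R] [StarRing R]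
    {A B : Matrix m m R} (hA : A.IsHermitian) (hB : B.IsHermitian) :
    star (trace (A * B)) = trace (A * B) := by
  rw [← trace_conjTranspose, conjTranspose_mul, hA.eq, hB.eq, trace_mul_comm]

lemma trace_mul_vecMulVec_mul_mul_vecMulVec {m R : Type*} [Fintype m] [CommSemiring R]
    (A : Matrix m m R) (v w : m → R) :
    trace (A * vecMulVec v w * A * vecMulVec v w) = trace (A * vecMulVec v w) ^ 2 := by
  rw [Matrix.mul_assoc (A * vecMulVec v w), mul_vecMulVec, vecMulVec_mul_vecMulVec,
    trace_vecMulVec, trace_vecMulVec, dotProduct_smul, smul_eq_mul, dotProduct_comm w, sq]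

lemma fin4_xor_eq_zero_iff (a b : Fin 4) : a ^^^ b = 0 ↔ a = b := by revert a b; decide

lemma fin4_xor_xor_cancel_left (a b : Fin 4) : a ^^^ (a ^^^ b) = b := by revert a b; decide

def pauliPhase : Fin 4 → Fin 4 → ℂ
  | 1, 2 | 2, 3 | 3, 1 => Complex.I
  | 2, 1 | 3, 2 | 1, 3 => -Complex.I
  | _, _ => 1

def pauliCommSign (a b : Fin 4) : ℂ := if a = 0 ∨ b = 0 ∨ a = b then 1 else -1

def pauliTransposeSign (a : Fin 4) : ℂ := if a = 2 then -1 else 1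

lemma pauli1_mul (a b : Fin 4) : pauli1 a * pauli1 b = pauliPhase a b • pauli1 (a ^^^ b) := by
  fin_cases a <;> fin_cases b <;> ext i j <;> fin_cases i <;> fin_cases j <;>
    simp [pauli1, pauliPhase, mul_apply]

lemma star_pauliPhase_mul_self (a b : Fin 4) : star (pauliPhase a b) * pauliPhase a b = 1 := by
  fin_cases a <;> fin_cases b <;> simp [pauliPhase]

lemma pauli1_mul_mul_self (a b : Fin 4) :
    pauli1 a * pauli1 b * pauli1 a = pauliCommSign a b • pauli1 b := by
  fin_cases a <;> fin_cases b <;> ext i j <;> fin_cases i <;> fin_cases j <;>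
    simp [pauli1, pauliCommSign, mul_apply]

lemma pauli1_conjTranspose (a : Fin 4) : (pauli1 a)ᴴ = pauli1 a := by
  fin_cases a <;> ext i j <;> fin_cases i <;> fin_cases j <;> simp [pauli1]

lemma pauli1_transpose (a : Fin 4) : (pauli1 a)ᵀ = pauliTransposeSign a • pauli1 a := by
  fin_cases a <;> ext i j <;> fin_cases i <;> fin_cases j <;> simp [pauli1, pauliTransposeSign]

lemma pauliTransposeSign_mul_self (a : Fin 4) :
    pauliTransposeSign a * pauliTransposeSign a = 1 := by
  unfold pauliTransposeSign
  split_ifs <;> norm_num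

lemma sum_pauli1_apply_mul_apply (i j k l : Fin 2) :
    ∑ a, pauli1 a i j * pauli1 a k l = if i = l ∧ j = k then 2 else 0 := by
  fin_cases i <;> fin_cases j <;> fin_cases k <;> fin_cases l <;>
    simp [Fin.sum_univ_four, pauli1] <;> norm_num

lemma pauliCommSign_xor (a b c : Fin 4) :
    pauliCommSign a (b ^^^ c) = pauliCommSign a b * pauliCommSign a c := by
  fin_cases a <;> fin_cases b <;> fin_cases c <;> simp [pauliCommSign]

lemma sum_pauliCommSign (b : Fin 4) : ∑ a, pauliCommSign a b = if b = 0 then 4 else 0 := by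
  fin_cases b <;> simp [Fin.sum_univ_four, pauliCommSign]

section PauliStrings

variable {n : ℕ}

def pauliXor (s t : Fin n → Fin 4) : Fin n → Fin 4 := fun a => s a ^^^ t a

def pauliStringPhase (s t : Fin n → Fin 4) : ℂ := ∏ a, pauliPhase (s a) (t a)

def pauliStringCommSign (s t : Fin n → Fin 4) : ℂ := ∏ a, pauliCommSign (s a) (t a)

def pauliStringTransposeSign (s : Fin n → Fin 4) : ℂ := ∏ a, pauliTransposeSign (s a)

lemma pauliOp_eq_kronPi (s : Fin n → Fin 4) : PauliOp n s = kronPi fun a => pauli1 (s a) := rfl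

lemma pauliOp_mul (s t : Fin n → Fin 4) :
    PauliOp n s * PauliOp n t = pauliStringPhase s t • PauliOp n (pauliXor s t) := by
  simp only [pauliOp_eq_kronPi, kronPi_mul, pauli1_mul, kronPi_smul, pauliStringPhase, pauliXor]

lemma star_pauliStringPhase_mul_self (s t : Fin n → Fin 4) :
    star (pauliStringPhase s t) * pauliStringPhase s t = 1 := by
  rw [pauliStringPhase, star_prod, ← prod_mul_distrib]
  exact prod_eq_one fun a _ => star_pauliPhase_mul_self _ _

lemma pauliOp_mul_mul_self (s t : Fin n → Fin 4) :
    PauliOp n s * PauliOp n t * PauliOp n s = pauliStringCommSign s t • PauliOp n t := by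
  simp only [pauliOp_eq_kronPi, kronPi_mul, pauli1_mul_mul_self, kronPi_smul,
    pauliStringCommSign]

lemma pauliOp_isHermitian (s : Fin n → Fin 4) : (PauliOp n s).IsHermitian := by
  simp only [IsHermitian, pauliOp_eq_kronPi, kronPi_conjTranspose, pauli1_conjTranspose]

lemma pauliOp_transpose (s : Fin n → Fin 4) :
    (PauliOp n s)ᵀ = pauliStringTransposeSign s • PauliOp n s := by
  simp only [pauliOp_eq_kronPi, kronPi_transpose, pauli1_transpose, kronPi_smul,
    pauliStringTransposeSign]

lemma pauliStringTransposeSign_mul_self (s : Fin n → Fin 4) :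
    pauliStringTransposeSign s * pauliStringTransposeSign s = 1 := by
  simp [pauliStringTransposeSign, ← prod_mul_distrib, pauliTransposeSign_mul_self]

lemma sum_pauliOp_apply_mul_apply (i j k l : Fin n → Fin 2) :
    ∑ s, PauliOp n s i j * PauliOp n s k l = if i = l ∧ j = k then 2 ^ n else 0 := by
  simp only [PauliOp, of_apply, ← prod_mul_distrib]
  rw [← Fintype.prod_sum fun a x => pauli1 x (i a) (j a) * pauli1 x (k a) (l a)]
  simp [sum_pauli1_apply_mul_apply, prod_ite_zero, funext_iff, forall_and]

lemma sum_trace_mul_smul_pauliOp (A : Matrix (Fin n → Fin 2) (Fin n → Fin 2) ℂ) :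
    ∑ s, trace (PauliOp n s * A) • PauliOp n s = (2 ^ n : ℂ) • A := by
  ext i j
  calc (∑ s, trace (PauliOp n s * A) • PauliOp n s) i j
      = ∑ k, ∑ l, A l k * ∑ s, PauliOp n s k l * PauliOp n s i j := by
        simp only [Matrix.sum_apply, Matrix.smul_apply, smul_eq_mul, trace, diag_apply, mul_apply,
          sum_mul, mul_sum]
        rw [sum_comm]
        refine sum_congr rfl fun k _ => ?_
        rw [sum_comm]
        exact sum_congr rfl fun l _ => sum_congr rfl fun s _ => by ring
    _ = ((2 ^ n : ℂ) • A) i j := by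
        simp [sum_pauliOp_apply_mul_apply, ite_and, mul_comm]

lemma sum_pauliOp_mul_mul_pauliOp (C : Matrix (Fin n → Fin 2) (Fin n → Fin 2) ℂ) :
    ∑ s, PauliOp n s * C * PauliOp n s = (2 ^ n * trace C) • (1 : Matrix _ _ ℂ) := by
  ext i l
  calc (∑ s, PauliOp n s * C * PauliOp n s) i l
      = ∑ k, ∑ j, C j k * ∑ s, PauliOp n s i j * PauliOp n s k l := by
        simp only [Matrix.sum_apply, mul_apply, sum_mul, mul_sum]
        rw [sum_comm]
        refine sum_congr rfl fun k _ => ?_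
        rw [sum_comm]
        exact sum_congr rfl fun j _ => sum_congr rfl fun s _ => by ring
    _ = ((2 ^ n * trace C) • (1 : Matrix _ _ ℂ)) i l := by
        simp [sum_pauliOp_apply_mul_apply, ite_and, one_apply, trace, mul_sum, mul_comm]

lemma sum_trace_pauliOp_mul_mul_trace (A B : Matrix (Fin n → Fin 2) (Fin n → Fin 2) ℂ) :
    ∑ s, trace (PauliOp n s * A) * trace (PauliOp n s * B) = 2 ^ n * trace (A * B) := by
  calc ∑ s, trace (PauliOp n s * A) * trace (PauliOp n s * B)
      = trace ((∑ s, trace (PauliOp n s * A) • PauliOp n s) * B) := by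
        simp [Finset.sum_mul, trace_sum, trace_smul]
    _ = 2 ^ n * trace (A * B) := by
        rw [sum_trace_mul_smul_pauliOp, Matrix.smul_mul, trace_smul, smul_eq_mul]

lemma sum_trace_pauliOp_mul_mul_pauliOp_mul (C D : Matrix (Fin n → Fin 2) (Fin n → Fin 2) ℂ) :
    ∑ s, trace (PauliOp n s * C * PauliOp n s * D) = 2 ^ n * trace C * trace D := by
  rw [← trace_sum, ← Finset.sum_mul, sum_pauliOp_mul_mul_pauliOp, Matrix.smul_mul, one_mul,
    trace_smul, smul_eq_mul]

def pauliFourier (f : (Fin n → Fin 4) → ℂ) (t : Fin n → Fin 4) : ℂ :=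
  ∑ u, pauliStringCommSign t u * f u

def pauliConv (f g : (Fin n → Fin 4) → ℂ) (u : Fin n → Fin 4) : ℂ :=
  ∑ s, f s * g (pauliXor s u)

lemma pauliStringCommSign_pauliXor (t s u : Fin n → Fin 4) :
    pauliStringCommSign t (pauliXor s u) = pauliStringCommSign t s * pauliStringCommSign t u := by
  simp only [pauliStringCommSign, pauliXor, pauliCommSign_xor, prod_mul_distrib]

lemma pauliXor_eq_zero_iff {s u : Fin n → Fin 4} : pauliXor s u = 0 ↔ s = u := by
  simp only [pauliXor, funext_iff, Pi.zero_apply, fin4_xor_eq_zero_iff]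

lemma pauliXor_involutive (s : Fin n → Fin 4) : Function.Involutive (pauliXor s) :=
  fun u => funext fun a => fin4_xor_xor_cancel_left (s a) (u a)

lemma sum_pauliStringCommSign (u : Fin n → Fin 4) :
    ∑ t, pauliStringCommSign t u = if u = 0 then 4 ^ n else 0 := by
  simp only [pauliStringCommSign]
  rw [← Fintype.prod_sum fun a x => pauliCommSign x (u a)]
  simp [sum_pauliCommSign, prod_ite_zero, funext_iff]

lemma sum_pauliStringCommSign_mul_pauliFourier (f : (Fin n → Fin 4) → ℂ) (s : Fin n → Fin 4) :
    ∑ t, pauliStringCommSign t s * pauliFourier f t = 4 ^ n * f s := by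
  simp only [pauliFourier, mul_sum, ← mul_assoc, ← pauliStringCommSign_pauliXor]
  rw [sum_comm]
  simp [← sum_mul, sum_pauliStringCommSign, pauliXor_eq_zero_iff]

lemma pauliFourier_injective : Function.Injective (pauliFourier (n := n)) := by
  intro f g hfg
  funext s
  refine mul_left_cancel₀ (by norm_num : (4 : ℂ) ^ n ≠ 0) ?_
  rw [← sum_pauliStringCommSign_mul_pauliFourier, ← sum_pauliStringCommSign_mul_pauliFourier, hfg]

lemma pauliFourier_pauliConv (f g : (Fin n → Fin 4) → ℂ) :
    pauliFourier (pauliConv f g) = pauliFourier f * pauliFourier g := by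
  funext t
  calc pauliFourier (pauliConv f g) t
      = ∑ s, ∑ u, pauliStringCommSign t (pauliXor s u) * (f s * g u) := by
        simp only [pauliFourier, pauliConv, mul_sum]
        rw [sum_comm]
        refine sum_congr rfl fun s _ => ?_
        exact Fintype.sum_bijective _ (pauliXor_involutive s).bijective _ _ fun u => by
          rw [pauliXor_involutive s u]
    _ = (pauliFourier f * pauliFourier g) t := by
        simp only [pauliStringCommSign_pauliXor, pauliFourier, Pi.mul_apply, sum_mul_sum]
        exact sum_congr rfl fun s _ => sum_congr rfl fun u _ => by ring

lemma pTil_smul {c : ℂ} (hc : star c * c = 1) (ψ A : Matrix (Fin n → Fin 2) (Fin n → Fin 2) ℂ) :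
    pTil n ψ (c • A) = pTil n ψ A := by
  simp only [pTil, Matrix.smul_mul, trace_smul, smul_eq_mul, star_mul']
  linear_combination trace (A * ψ) * star (trace (A * ψ)) / 2 ^ n * hc

lemma qTil_smul {c : ℂ} (hc : star c * c = 1) (ψ A : Matrix (Fin n → Fin 2) (Fin n → Fin 2) ℂ) :
    qTil n ψ (c • A) = qTil n ψ A := by
  simp only [qTil, conjTranspose_smul, Matrix.smul_mul, Matrix.mul_smul, trace_smul, smul_eq_mul]
  linear_combination trace (A * ψ * Aᴴ * ψᵀ) / 2 ^ n * hc

lemma pauliFourier_pTil {ψ : Matrix (Fin n → Fin 2) (Fin n → Fin 2) ℂ} (hψ : ψ.IsHermitian)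
    (t : Fin n → Fin 4) :
    pauliFourier (pTil n ψ ∘ PauliOp n) t =
      trace (PauliOp n t * ψ * PauliOp n t * ψ) := by
  have conj : ∀ u, pauliStringCommSign t u * trace (PauliOp n u * ψ) =
      trace (PauliOp n u * (PauliOp n t * ψ * PauliOp n t)) := fun u => by
    rw [← smul_eq_mul, ← trace_smul, ← Matrix.smul_mul, ← pauliOp_mul_mul_self]
    simp only [Matrix.mul_assoc]
    rw [trace_mul_comm (PauliOp n t)]
    simp only [Matrix.mul_assoc]
  calc pauliFourier (pTil n ψ ∘ PauliOp n) t
      = (∑ u, trace (PauliOp n u * (PauliOp n t * ψ * PauliOp n t)) *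
          trace (PauliOp n u * ψ)) / 2 ^ n := by
        simp only [pauliFourier, Function.comp_apply, pTil, sum_div, ← conj,
          star_trace_mul_of_isHermitian (pauliOp_isHermitian _) hψ]
        exact sum_congr rfl fun u _ => by ring
    _ = trace (PauliOp n t * ψ * PauliOp n t * ψ) := by
        rw [sum_trace_pauliOp_mul_mul_trace]
        field_simp

lemma pauliFourier_qTil (ψ : Matrix (Fin n → Fin 2) (Fin n → Fin 2) ℂ) (t : Fin n → Fin 4) :
    pauliFourier (qTil n ψ ∘ PauliOp n) t =
      pauliStringTransposeSign t * trace (PauliOp n t * ψ) ^ 2 := by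
  have conj : ∀ u, pauliStringCommSign t u * trace (PauliOp n u * ψ * PauliOp n u * ψᵀ) =
      trace (PauliOp n u * (PauliOp n t * ψ) * PauliOp n u * (ψᵀ * PauliOp n t)) := fun u => by
    rw [← smul_eq_mul, ← trace_smul, ← Matrix.smul_mul, ← Matrix.smul_mul, ← Matrix.smul_mul,
      ← pauliOp_mul_mul_self]
    simp only [Matrix.mul_assoc]
    rw [trace_mul_comm (PauliOp n t)]
    simp only [Matrix.mul_assoc]
  have transpose : trace (ψᵀ * PauliOp n t) =
      pauliStringTransposeSign t * trace (PauliOp n t * ψ) := by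
    rw [← trace_transpose, transpose_mul, transpose_transpose, pauliOp_transpose,
      Matrix.smul_mul, trace_smul, smul_eq_mul]
  calc pauliFourier (qTil n ψ ∘ PauliOp n) t
      = (∑ u, trace (PauliOp n u * (PauliOp n t * ψ) * PauliOp n u * (ψᵀ * PauliOp n t))) /
          2 ^ n := by
        simp only [pauliFourier, Function.comp_apply, qTil, (pauliOp_isHermitian _).eq, sum_div,
          ← conj, mul_div_assoc]
    _ = pauliStringTransposeSign t * trace (PauliOp n t * ψ) ^ 2 := by
        rw [sum_trace_pauliOp_mul_mul_pauliOp_mul, transpose]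
        field_simp

end PauliStrings

theorem bell_difference_eq_pauli_convolution_general (n : ℕ)
    (v : (Fin n → Fin 2) → ℂ) (s : Fin n → Fin 4) :
    ∑ s' : Fin n → Fin 4,
        qTil n (Matrix.vecMulVec v (star v)) (PauliOp n s') *
          qTil n (Matrix.vecMulVec v (star v)) (PauliOp n s' * PauliOp n s) =
      ∑ s' : Fin n → Fin 4,
        pTil n (Matrix.vecMulVec v (star v)) (PauliOp n s') *
          pTil n (Matrix.vecMulVec v (star v)) (PauliOp n s' * PauliOp n s) := by
  set ψ := vecMulVec v (star v) with hψ
  have hψ_herm : ψ.IsHermitian := by simp [ψ, IsHermitian]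
  simp only [pauliOp_mul, qTil_smul (star_pauliStringPhase_mul_self _ s),
    pTil_smul (star_pauliStringPhase_mul_self _ s)]
  suffices pauliConv (qTil n ψ ∘ PauliOp n) (qTil n ψ ∘ PauliOp n) =
      pauliConv (pTil n ψ ∘ PauliOp n) (pTil n ψ ∘ PauliOp n) from congrFun this s
  refine pauliFourier_injective (funext fun t => ?_)
  rw [pauliFourier_pauliConv, pauliFourier_pauliConv, Pi.mul_apply, Pi.mul_apply,
    pauliFourier_qTil, pauliFourier_pTil hψ_herm, hψ, trace_mul_vecMulVec_mul_mul_vecMulVec]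
  linear_combination trace (PauliOp n t * vecMulVec v (star v)) ^ 4 *
    pauliStringTransposeSign_mul_self t

/-- For a pure state `ψ = v v†`, the Bell difference distribution equals the
self-convolution of the Pauli distribution: for every `P ∈ 𝒫_n`,
`∑_Q q̃_ψ(Q) q̃_ψ(QP) = ∑_Q p̃_ψ(Q) p̃_ψ(QP)`. -/
theorem bell_difference_eq_pauli_convolution (n : ℕ) (hn : 1 ≤ n)
    (v : (Fin n → Fin 2) → ℂ) (hv : star v ⬝ᵥ v = 1) (s : Fin n → Fin 4) :
    ∑ s' : Fin n → Fin 4,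
        qTil n (Matrix.vecMulVec v (star v)) (PauliOp n s') *
          qTil n (Matrix.vecMulVec v (star v)) (PauliOp n s' * PauliOp n s) =
      ∑ s' : Fin n → Fin 4,
        pTil n (Matrix.vecMulVec v (star v)) (PauliOp n s') *
          pTil n (Matrix.vecMulVec v (star v)) (PauliOp n s' * PauliOp n s) :=
  bell_difference_eq_pauli_convolution_general n v s
end
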